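/- For m ≥ 0, let F_m(z) be the formal power series whose coefficient of z^n is ∑_{T: |T|=n} R(T)^m, the sum over all full binary trees T with n nodes. Then for every m ≥ 0 the identity F_m(z) = z + z · (∑_{k=0}^{m} binom(m,k) F_k(z))² holds as formal power series; in particular F_0(z) = z + z F_0(z)². -/

import Mathlib

open scoped ENNReal NNReal

/-- Rooted ordered (plane) trees: a tree is a root together with a linearly
ordered (finite) list of subtrees. -/
inductive PTree : Type where
  | node : List PTree → PTree

namespace PTree

/-- The list of subtrees rooted at the children of the root. -/
def children : PTree → List PTree
  | node ts => ts

mutual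
  /-- The number of nodes of a tree. -/
  def size : PTree → ℕ
    | node ts => 1 + sizeList ts
  def sizeList : List PTree → ℕ
    | [] => 0
    | t :: ts => size t + sizeList ts
end

/-- The subtree rooted at a given address (a path from the root, recorded as the
list of child indices), if it exists. -/
def subtreeAt : List ℕ → PTree → Option PTree
  | [], t => some t
  | i :: p, node ts => (ts[i]?).bind (subtreeAt p)

mutual
  /-- The list of addresses of all nodes of a tree. -/
  def nodesList : PTree → List (List ℕ)
    | node ts => [] :: nodesListAux 0 ts
  def nodesListAux : ℕ → List PTree → List (List ℕ)
    | _, [] => []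
    | i, t :: ts => (nodesList t).map (i :: ·) ++ nodesListAux (i + 1) ts
end

/-- The set of nodes of a tree, represented by their addresses. -/
def nodes (T : PTree) : Finset (List ℕ) := (nodesList T).toFinset

/-- The fringe subtree `T_v` rooted at the node with address `v`
(junk value if `v` is not a node of `T`). -/
def fringe (T : PTree) (v : List ℕ) : PTree := (subtreeAt v T).getD (node [])

/-- The out-degree (number of children) of the node at address `v`. -/
def degreeAt (T : PTree) (v : List ℕ) : ℕ := (fringe T v).children.length

/-- `V` is the node set of a root subtree of `T`: a nonempty set of nodes containing
the root and closed under taking parents. -/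
def IsRootSub (T : PTree) (V : Finset (List ℕ)) : Prop :=
  (V : Set (List ℕ)) ⊆ (nodes T : Set (List ℕ)) ∧ [] ∈ V ∧
    ∀ v ∈ V, v ≠ [] → v.dropLast ∈ V

/-- `V` is the node set of a (general) subtree of `T`: a nonempty set of nodes
inducing a connected subgraph, i.e. having a minimal node `r` such that `V` contains
every node on the path from `r` to any of its elements. -/
def IsSub (T : PTree) (V : Finset (List ℕ)) : Prop :=
  (V : Set (List ℕ)) ⊆ (nodes T : Set (List ℕ)) ∧ V.Nonempty ∧
    ∃ r ∈ V, ∀ v ∈ V, r <+: v ∧ ∀ w : List ℕ, r <+: w → w <+: v → w ∈ V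

/-- `R T` : the number of root subtrees of `T`. -/
noncomputable def R (T : PTree) : ℕ := {V : Finset (List ℕ) | IsRootSub T V}.ncard

/-- `S T` : the number of (general) subtrees of `T`. -/
noncomputable def S (T : PTree) : ℕ := {V : Finset (List ℕ) | IsSub T V}.ncard

/-- `π(u,v)`: the product of `d(w)⁻¹` over the nodes `w` on the path
from `u` to `v`, excluding `v` itself (`u` is assumed to be an ancestor of `v`). -/
noncomputable def pathProd (T : PTree) (u v : List ℕ) : ℝ :=
  ∏ j ∈ Finset.Ico u.length v.length, ((degreeAt T (v.take j) : ℝ))⁻¹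

/-- `η(v) = ∑_{u ⪯ v} π(u,v)`, the sum over all ancestors `u` of `v` (including `v`). -/
noncomputable def eta (T : PTree) (v : List ℕ) : ℝ :=
  ∑ j ∈ Finset.range (v.length + 1), pathProd T (v.take j) v

/-- `ζ(T) = ∑_{w ∈ T} π(o,w)` where `o` is the root. -/
noncomputable def zeta (T : PTree) : ℝ := ∑ v ∈ nodes T, pathProd T [] v

/-- The weight `w(T) = ∏_{v ∈ T} w_{d(v)}` of a tree, for a weight sequence `w`. -/
noncomputable def weight (w : ℕ → ℝ) (T : PTree) : ℝ := ∏ v ∈ nodes T, w (degreeAt T v)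

open Classical in
/-- `∑_{|T| = n} w(T) f(T)`, the sum over all rooted ordered trees of size `n`. -/
noncomputable def treeSum (w : ℕ → ℝ) (n : ℕ) (f : PTree → ℝ) : ℝ :=
  ∑' T : PTree, if size T = n then weight w T * f T else 0

/-- The partition function `Z_n = ∑_{|T| = n} w(T)`. -/
noncomputable def Z (w : ℕ → ℝ) (n : ℕ) : ℝ := treeSum w n fun _ => 1

/-- The expectation `E f(𝒯_n)` for the random tree `𝒯_n` of size `n` chosen with
probability proportional to its weight. -/
noncomputable def expect (w : ℕ → ℝ) (n : ℕ) (f : PTree → ℝ) : ℝ := treeSum w n f / Z w n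

open Classical in
/-- The probability `P(𝒯_n ∈ P)` for the random tree `𝒯_n` of size `n`. -/
noncomputable def prob (w : ℕ → ℝ) (n : ℕ) (P : PTree → Prop) : ℝ :=
  expect w n fun T => if P T then 1 else 0

/-- The variance `Var f(𝒯_n)`. -/
noncomputable def varOf (w : ℕ → ℝ) (n : ℕ) (f : PTree → ℝ) : ℝ :=
  expect w n (fun T => f T ^ 2) - (expect w n f) ^ 2

/-- The filter of admissible sizes `n → ∞`: those `n` for which trees of size `n`
have positive total weight (i.e. `𝒯_n` is defined). -/
noncomputable def admissibleFilter (w : ℕ → ℝ) : Filter ℕ :=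
  Filter.atTop ⊓ Filter.principal {n | 0 < Z w n}

/-- The number of root subtrees of `T` whose number of nodes satisfies `p`. -/
noncomputable def rootSubCount (T : PTree) (p : ℕ → Prop) : ℕ :=
  {V : Finset (List ℕ) | IsRootSub T V ∧ p V.card}.ncard

/-- `∑_{T' ⊆_r T} |T'|^r`, the sum of the `r`-th powers of the sizes of all
root subtrees of `T`. -/
noncomputable def rootSubSizePow (T : PTree) (r : ℕ) : ℝ :=
  ∑' V : {V : Finset (List ℕ) // IsRootSub T V}, ((V.1.card : ℝ)) ^ r

/-- A full binary tree: every node has exactly 0 or 2 children. -/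
def FullBinary (T : PTree) : Prop := ∀ v ∈ nodes T, degreeAt T v = 0 ∨ degreeAt T v = 2

/-- Replace the fringe subtree of `T` at address `v` by `T'`. -/
def replaceAt : List ℕ → PTree → PTree → PTree
  | [], _, t' => t'
  | i :: p, node ts, t' => node (ts.set i (replaceAt p (ts.getD i (node [])) t'))

end PTree

/-- The generator `Φ(x) = ∑_{i ≥ 0} w_i x^i`. -/
noncomputable def Phi (w : ℕ → ℝ) (x : ℝ) : ℝ := ∑' i : ℕ, w i * x ^ i

/-- The derivative `Φ'(x) = ∑_{i ≥ 1} i w_i x^{i-1}` of the generator. -/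
noncomputable def PhiD (w : ℕ → ℝ) (x : ℝ) : ℝ :=
  ∑' i : ℕ, ((i + 1 : ℕ) : ℝ) * w (i + 1) * x ^ i

/-- The second derivative `Φ''(x)` of the generator. -/
noncomputable def PhiDD (w : ℕ → ℝ) (x : ℝ) : ℝ :=
  ∑' i : ℕ, ((i + 2 : ℕ) : ℝ) * ((i + 1 : ℕ) : ℝ) * w (i + 2) * x ^ i

/-- The filter describing `z ↑ R` for `R ∈ (0,∞]` the radius of convergence:
`z → R⁻` if `R < ∞`, and `z → ∞` if `R = ∞`. -/
noncomputable def leftLim (Rr : ℝ≥0∞) : Filter ℝ :=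
  if Rr = ⊤ then Filter.atTop else nhdsWithin Rr.toReal (Set.Iio Rr.toReal)

/-- The cumulative distribution function of the centered normal distribution `N(0, v)`. -/
noncomputable def gaussCDF (v : ℝ≥0) (x : ℝ) : ℝ :=
  ((ProbabilityTheory.gaussianReal 0 v) (Set.Iic x)).toReal

/-- The weighted generating function `F_k(z) = ∑_T w(T) R(T)^k z^{|T|}`. -/
noncomputable def Fgen (w : ℕ → ℝ) (k : ℕ) (z : ℝ) : ℝ :=
  ∑' T : PTree, PTree.weight w T * (PTree.R T : ℝ) ^ k * z ^ PTree.size T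

/-- The mixed generating function `G_{m,ℓ}(z) = ∑_T w(T) S(T)^m R(T)^ℓ z^{|T|}`. -/
noncomputable def Ggen (w : ℕ → ℝ) (m ℓ : ℕ) (z : ℝ) : ℝ :=
  ∑' T : PTree, PTree.weight w T * (PTree.S T : ℝ) ^ m * (PTree.R T : ℝ) ^ ℓ * z ^ PTree.size T

/-- The radius of convergence `ρ_k` of `F_k`. -/
noncomputable def rhoGen (w : ℕ → ℝ) (k : ℕ) : ℝ :=
  sSup {x : ℝ | 0 ≤ x ∧
    Summable fun T : PTree => PTree.weight w T * (PTree.R T : ℝ) ^ k * x ^ PTree.size T}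

/-- `F̂_k(z) = ∑_{j=0}^k C(k,j) F_j(z)`. -/
noncomputable def Fhat (w : ℕ → ℝ) (k : ℕ) (z : ℝ) : ℝ :=
  ∑ j ∈ Finset.range (k + 1), (k.choose j : ℝ) * Fgen w j z


open Classical in
/-- The number of good nodes of `T`: nodes `v` whose fringe subtree has exactly
`3ℓ+1` nodes and with `η(v) ≤ A`. -/
noncomputable def PTree.goodCount (A : ℝ) (ℓ : ℕ) (T : PTree) : ℕ :=
  ((PTree.nodes T).filter fun v =>
    PTree.size (PTree.fringe T v) = 3 * ℓ + 1 ∧ PTree.eta T v ≤ A).card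

open Classical in
/-- `∑_{T full binary, |T| = n} R(T)^m`, the coefficient of `z^n` in `F_m(z)`
for full binary trees. -/
noncomputable def binRCoeff (m n : ℕ) : ℝ :=
  ∑' T : PTree, if PTree.size T = n ∧ PTree.FullBinary T then (PTree.R T : ℝ) ^ m else 0

/-- The formal power series `F_m(z) = ∑_n (∑_{T full binary, |T| = n} R(T)^m) z^n`. -/
noncomputable def binF (m : ℕ) : PowerSeries ℝ := PowerSeries.mk fun n => binRCoeff m n

namespace BinAux

open PTree

/-! ### Basic PTree lemmas -/

lemma size_node (ts : List PTree) : size (node ts) = 1 + sizeList ts := by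
  rw [size]

lemma size_pos (T : PTree) : 0 < size T := by
  cases T with
  | node ts => rw [size_node]; omega

lemma mem_nodes_leaf {v : List ℕ} : v ∈ nodes (node []) ↔ v = [] := by
  simp [nodes, nodesList, nodesListAux]

lemma mem_nodes_pair {l r : PTree} {v : List ℕ} :
    v ∈ nodes (node [l, r]) ↔
      v = [] ∨ (∃ u ∈ nodes l, v = 0 :: u) ∨ ∃ u ∈ nodes r, v = 1 :: u := by
  simp only [nodes, nodesList, nodesListAux, List.toFinset_cons, List.mem_toFinset,
    Finset.mem_insert, List.mem_append, List.mem_map]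
  constructor
  · rintro (h | h)
    · exact Or.inl h
    · rcases h with (⟨u, hu, rfl⟩ | h)
      · exact Or.inr (Or.inl ⟨u, by simpa using hu, rfl⟩)
      · rcases h with (⟨u, hu, rfl⟩ | h)
        · exact Or.inr (Or.inr ⟨u, by simpa using hu, rfl⟩)
        · simp [nodesListAux] at h
  · rintro (rfl | ⟨u, hu, rfl⟩ | ⟨u, hu, rfl⟩)
    · exact Or.inl rfl
    · exact Or.inr (Or.inl ⟨u, by simpa using hu, rfl⟩)
    · exact Or.inr (Or.inr (Or.inl ⟨u, by simpa using hu, rfl⟩))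

lemma nil_mem_nodes (T : PTree) : [] ∈ nodes T := by
  cases T with
  | node ts => simp [nodes, nodesList]

lemma fringe_nil (T : PTree) : fringe T [] = T := rfl

lemma fringe_pair_zero (l r : PTree) (u : List ℕ) :
    fringe (node [l, r]) (0 :: u) = fringe l u := by
  simp [fringe, subtreeAt]

lemma fringe_pair_one (l r : PTree) (u : List ℕ) :
    fringe (node [l, r]) (1 :: u) = fringe r u := by
  simp [fringe, subtreeAt]

lemma degreeAt_nil (ts : List PTree) : degreeAt (node ts) [] = ts.length := rfl

lemma degreeAt_pair_zero (l r : PTree) (u : List ℕ) :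
    degreeAt (node [l, r]) (0 :: u) = degreeAt l u := by
  simp [degreeAt, fringe_pair_zero]

lemma degreeAt_pair_one (l r : PTree) (u : List ℕ) :
    degreeAt (node [l, r]) (1 :: u) = degreeAt r u := by
  simp [degreeAt, fringe_pair_one]

lemma fullBinary_leaf : FullBinary (node []) := by
  intro v hv
  rw [mem_nodes_leaf] at hv
  subst hv
  left; rfl

lemma fullBinary_pair {l r : PTree} :
    FullBinary (node [l, r]) ↔ FullBinary l ∧ FullBinary r := by
  constructor
  · intro h
    constructor
    · intro v hv
      have := h (0 :: v) (mem_nodes_pair.2 (Or.inr (Or.inl ⟨v, hv, rfl⟩)))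
      rwa [degreeAt_pair_zero] at this
    · intro v hv
      have := h (1 :: v) (mem_nodes_pair.2 (Or.inr (Or.inr ⟨v, hv, rfl⟩)))
      rwa [degreeAt_pair_one] at this
  · rintro ⟨hl, hr⟩ v hv
    rcases mem_nodes_pair.1 hv with rfl | ⟨u, hu, rfl⟩ | ⟨u, hu, rfl⟩
    · right; rfl
    · rw [degreeAt_pair_zero]; exact hl u hu
    · rw [degreeAt_pair_one]; exact hr u hu

/-! ### Counting root subtrees -/

lemma rootSub_finite (T : PTree) : {V : Finset (List ℕ) | IsRootSub T V}.Finite := by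
  apply Set.Finite.subset ((nodes T).powerset.finite_toSet)
  intro V hV
  exact Finset.mem_coe.2 (Finset.mem_powerset.2 (Finset.coe_subset.1 hV.1))

lemma R_leaf : R (node []) = 1 := by
  have : {V : Finset (List ℕ) | IsRootSub (node []) V} = {{[]}} := by
    ext V
    simp only [Set.mem_setOf_eq, Set.mem_singleton_iff]
    constructor
    · rintro ⟨h1, h2, _⟩
      apply Finset.Subset.antisymm
      · intro v hv
        have := h1 hv
        simp only [Finset.coe_insert, Finset.mem_coe] at this ⊢
        simpa [mem_nodes_leaf] using this
      · simpa using h2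
    · rintro rfl
      refine ⟨?_, by simp, by simp⟩
      intro v hv
      simp only [Finset.coe_singleton, Set.mem_singleton_iff] at hv
      subst hv
      exact nil_mem_nodes _
  rw [R, this]
  simp

/-- The set of addresses of `V` below child `i`. -/
noncomputable def sel (i : ℕ) (V : Finset (List ℕ)) : Finset (List ℕ) :=
  V.preimage (i :: ·) (List.cons_injective.injOn)

lemma mem_sel {i : ℕ} {V : Finset (List ℕ)} {u : List ℕ} :
    u ∈ sel i V ↔ i :: u ∈ V := Finset.mem_preimage

/-- Reassemble a root subtree from the root and the two pieces. -/
noncomputable def ins (A B : Finset (List ℕ)) : Finset (List ℕ) :=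
  insert [] (A.image (0 :: ·) ∪ B.image (1 :: ·))

lemma mem_ins {A B : Finset (List ℕ)} {v : List ℕ} :
    v ∈ ins A B ↔ v = [] ∨ (∃ u ∈ A, v = 0 :: u) ∨ ∃ u ∈ B, v = 1 :: u := by
  simp only [ins, Finset.mem_insert, Finset.mem_union, Finset.mem_image]
  constructor
  · rintro (rfl | (⟨u, hu, rfl⟩ | ⟨u, hu, rfl⟩))
    · exact Or.inl rfl
    · exact Or.inr (Or.inl ⟨u, hu, rfl⟩)
    · exact Or.inr (Or.inr ⟨u, hu, rfl⟩)
  · rintro (rfl | (⟨u, hu, rfl⟩ | ⟨u, hu, rfl⟩))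
    · exact Or.inl rfl
    · exact Or.inr (Or.inl ⟨u, hu, rfl⟩)
    · exact Or.inr (Or.inr ⟨u, hu, rfl⟩)

lemma dropLast_cons {i : ℕ} {u : List ℕ} (hu : u ≠ []) :
    (i :: u).dropLast = i :: u.dropLast := by
  cases u with
  | nil => exact absurd rfl hu
  | cons a l => rfl

lemma nil_mem_of_closed {V : Finset (List ℕ)}
    (hV : ∀ v ∈ V, v ≠ [] → v.dropLast ∈ V) : ∀ n (v : List ℕ), v.length ≤ n → v ∈ V → [] ∈ V := by
  intro n
  induction n with
  | zero =>
    intro v hl hv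
    have : v = [] := List.length_eq_zero_iff.1 (Nat.le_zero.1 hl)
    subst this; exact hv
  | succ n ih =>
    intro v hl hv
    by_cases h : v = []
    · subst h; exact hv
    · exact ih v.dropLast (by rw [List.length_dropLast]; omega) (hV v hv h)

lemma sel_mem_aux {l r : PTree} {V : Finset (List ℕ)} (hV : IsRootSub (node [l, r]) V)
    (i : ℕ) (c : PTree) (hc : ∀ u, (i :: u) ∈ nodes (node [l, r]) → u ∈ nodes c) :
    sel i V = ∅ ∨ IsRootSub c (sel i V) := by
  rcases Finset.eq_empty_or_nonempty (sel i V) with h | ⟨u₀, hu₀⟩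
  · exact Or.inl h
  have hclosed : ∀ u ∈ sel i V, u ≠ [] → u.dropLast ∈ sel i V := by
    intro u hu hne
    rw [mem_sel] at hu ⊢
    have := hV.2.2 (i :: u) hu (by simp)
    rwa [dropLast_cons hne] at this
  refine Or.inr ⟨?_, ?_, hclosed⟩
  · intro u hu
    simp only [Finset.mem_coe] at hu ⊢
    rw [mem_sel] at hu
    exact hc u (hV.1 hu)
  · exact nil_mem_of_closed hclosed u₀.length u₀ le_rfl hu₀

lemma ins_rootSub {l r : PTree} {A B : Finset (List ℕ)}
    (hA : A = ∅ ∨ IsRootSub l A) (hB : B = ∅ ∨ IsRootSub r B) :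
    IsRootSub (node [l, r]) (ins A B) := by
  refine ⟨?_, mem_ins.2 (Or.inl rfl), ?_⟩
  · intro v hv
    simp only [Finset.mem_coe] at hv ⊢
    rcases mem_ins.1 hv with rfl | ⟨u, hu, rfl⟩ | ⟨u, hu, rfl⟩
    · exact nil_mem_nodes _
    · rcases hA with rfl | hA
      · simp at hu
      · exact mem_nodes_pair.2 (Or.inr (Or.inl ⟨u, hA.1 hu, rfl⟩))
    · rcases hB with rfl | hB
      · simp at hu
      · exact mem_nodes_pair.2 (Or.inr (Or.inr ⟨u, hB.1 hu, rfl⟩))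
  · intro v hv hne
    rcases mem_ins.1 hv with rfl | ⟨u, hu, rfl⟩ | ⟨u, hu, rfl⟩
    · exact absurd rfl hne
    · by_cases h : u = []
      · subst h; exact mem_ins.2 (Or.inl rfl)
      · rcases hA with rfl | hA
        · simp at hu
        · rw [dropLast_cons h]
          exact mem_ins.2 (Or.inr (Or.inl ⟨u.dropLast, hA.2.2 u hu h, rfl⟩))
    · by_cases h : u = []
      · subst h; exact mem_ins.2 (Or.inl rfl)
      · rcases hB with rfl | hB
        · simp at hu
        · rw [dropLast_cons h]
          exact mem_ins.2 (Or.inr (Or.inr ⟨u.dropLast, hB.2.2 u hu h, rfl⟩))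

lemma ins_sel {l r : PTree} {V : Finset (List ℕ)} (hV : IsRootSub (node [l, r]) V) :
    ins (sel 0 V) (sel 1 V) = V := by
  ext v
  rw [mem_ins]
  constructor
  · rintro (rfl | ⟨u, hu, rfl⟩ | ⟨u, hu, rfl⟩)
    · exact hV.2.1
    · exact mem_sel.1 hu
    · exact mem_sel.1 hu
  · intro hv
    rcases mem_nodes_pair.1 (hV.1 hv) with rfl | ⟨u, _, rfl⟩ | ⟨u, _, rfl⟩
    · exact Or.inl rfl
    · exact Or.inr (Or.inl ⟨u, mem_sel.2 hv, rfl⟩)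
    · exact Or.inr (Or.inr ⟨u, mem_sel.2 hv, rfl⟩)

lemma sel_ins_zero (A B : Finset (List ℕ)) : sel 0 (ins A B) = A := by
  ext u
  rw [mem_sel, mem_ins]
  constructor
  · rintro (h | ⟨u', hu', h⟩ | ⟨u', hu', h⟩)
    · simp at h
    · obtain rfl : u = u' := by simpa using h
      exact hu'
    · simp at h
  · intro hu
    exact Or.inr (Or.inl ⟨u, hu, rfl⟩)

lemma sel_ins_one (A B : Finset (List ℕ)) : sel 1 (ins A B) = B := by
  ext u
  rw [mem_sel, mem_ins]
  constructor
  · rintro (h | ⟨u', hu', h⟩ | ⟨u', hu', h⟩)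
    · simp at h
    · simp at h
    · obtain rfl : u = u' := by simpa using h
      exact hu'
  · intro hu
    exact Or.inr (Or.inr ⟨u, hu, rfl⟩)

lemma cons_zero_mem_nodes {l r : PTree} {u : List ℕ} :
    (0 :: u) ∈ nodes (node [l, r]) ↔ u ∈ nodes l := by
  rw [mem_nodes_pair]
  constructor
  · rintro (h | ⟨u', hu', h⟩ | ⟨u', hu', h⟩)
    · simp at h
    · obtain rfl : u = u' := by simpa using h
      exact hu'
    · simp at h
  · intro hu; exact Or.inr (Or.inl ⟨u, hu, rfl⟩)

lemma cons_one_mem_nodes {l r : PTree} {u : List ℕ} :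
    (1 :: u) ∈ nodes (node [l, r]) ↔ u ∈ nodes r := by
  rw [mem_nodes_pair]
  constructor
  · rintro (h | ⟨u', hu', h⟩ | ⟨u', hu', h⟩)
    · simp at h
    · simp at h
    · obtain rfl : u = u' := by simpa using h
      exact hu'
  · intro hu; exact Or.inr (Or.inr ⟨u, hu, rfl⟩)

lemma empty_not_rootSub (T : PTree) : ¬ IsRootSub T ∅ := fun h => by simpa using h.2.1

noncomputable def rsEquiv (l r : PTree) :
    {V : Finset (List ℕ) // IsRootSub (node [l, r]) V} ≃
      (insert ∅ {A : Finset (List ℕ) | IsRootSub l A} : Set _) ×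
      (insert ∅ {B : Finset (List ℕ) | IsRootSub r B} : Set _) where
  toFun V := (⟨sel 0 V.1, by
      rcases sel_mem_aux V.2 0 l (fun u h => cons_zero_mem_nodes.1 h) with h | h
      · exact Set.mem_insert_iff.2 (Or.inl h)
      · exact Set.mem_insert_iff.2 (Or.inr h)⟩,
    ⟨sel 1 V.1, by
      rcases sel_mem_aux V.2 1 r (fun u h => cons_one_mem_nodes.1 h) with h | h
      · exact Set.mem_insert_iff.2 (Or.inl h)
      · exact Set.mem_insert_iff.2 (Or.inr h)⟩)
  invFun p := ⟨ins p.1.1 p.2.1,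
    ins_rootSub (Set.mem_insert_iff.1 p.1.2) (Set.mem_insert_iff.1 p.2.2)⟩
  left_inv V := Subtype.ext (ins_sel V.2)
  right_inv p := Prod.ext (Subtype.ext (sel_ins_zero _ _)) (Subtype.ext (sel_ins_one _ _))

lemma R_pair (l r : PTree) : R (node [l, r]) = (R l + 1) * (R r + 1) := by
  have h1 : R (node [l, r]) = Nat.card {V : Finset (List ℕ) // IsRootSub (node [l, r]) V} := by
    rw [R, ← Nat.card_coe_set_eq]
    rfl
  rw [h1, Nat.card_congr (rsEquiv l r), Nat.card_prod]
  have hA : Nat.card (insert ∅ {A : Finset (List ℕ) | IsRootSub l A} : Set _) = R l + 1 := by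
    rw [Nat.card_coe_set_eq]
    have := Set.ncard_insert_of_notMem (a := (∅ : Finset (List ℕ)))
      (s := {A : Finset (List ℕ) | IsRootSub l A}) (empty_not_rootSub l) (rootSub_finite l)
    rw [this, R]
  have hB : Nat.card (insert ∅ {B : Finset (List ℕ) | IsRootSub r B} : Set _) = R r + 1 := by
    rw [Nat.card_coe_set_eq]
    have := Set.ncard_insert_of_notMem (a := (∅ : Finset (List ℕ)))
      (s := {B : Finset (List ℕ) | IsRootSub r B}) (empty_not_rootSub r) (rootSub_finite r)
    rw [this, R]
  rw [hA, hB]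


/-! ### Full binary trees as an inductive type -/

inductive BTree : Type where
  | leaf : BTree
  | node : BTree → BTree → BTree
  deriving DecidableEq

namespace BTree

def bsize : BTree → ℕ
  | leaf => 1
  | node l r => bsize l + bsize r + 1

def Rb : BTree → ℕ
  | leaf => 1
  | node l r => (Rb l + 1) * (Rb r + 1)

def toP : BTree → PTree
  | leaf => PTree.node []
  | node l r => PTree.node [toP l, toP r]

lemma bsize_pos (b : BTree) : 0 < bsize b := by
  cases b <;> simp [bsize]

lemma size_toP (b : BTree) : size (toP b) = bsize b := by
  induction b with
  | leaf => rw [toP, size_node]; rfl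
  | node l r ihl ihr =>
    rw [toP, size_node, bsize, ← ihl, ← ihr]
    show 1 + (size (toP l) + (size (toP r) + 0)) = _
    omega

lemma fullBinary_toP (b : BTree) : FullBinary (toP b) := by
  induction b with
  | leaf => exact fullBinary_leaf
  | node l r ihl ihr => exact fullBinary_pair.2 ⟨ihl, ihr⟩

lemma R_toP (b : BTree) : R (toP b) = Rb b := by
  induction b with
  | leaf => exact R_leaf
  | node l r ihl ihr => rw [toP, R_pair, ihl, ihr, Rb]

lemma toP_injective : Function.Injective toP := by
  intro a
  induction a with
  | leaf => intro b h; cases b with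
    | leaf => rfl
    | node l r => simp [toP] at h
  | node l r ihl ihr =>
    intro b h
    cases b with
    | leaf => simp [toP] at h
    | node l' r' =>
      simp only [toP, PTree.node.injEq, List.cons.injEq, and_true] at h
      rw [ihl h.1, ihr h.2]

lemma toP_surj_aux : ∀ n : ℕ, ∀ T : PTree, size T = n → FullBinary T → ∃ b : BTree, toP b = T := by
  intro n
  induction n using Nat.strong_induction_on with
  | _ n ih =>
    intro T hn hT
    cases T with
    | node ts =>
      have hdeg := hT [] (nil_mem_nodes _)
      rw [degreeAt_nil] at hdeg
      rcases hdeg with h0 | h2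
      · rw [List.length_eq_zero_iff.1 h0]
        exact ⟨leaf, rfl⟩
      · obtain ⟨l, r, rfl⟩ : ∃ l r, ts = [l, r] := by
          match ts, h2 with
          | [l, r], _ => exact ⟨l, r, rfl⟩
        obtain ⟨hl, hr⟩ := fullBinary_pair.1 hT
        have hsz : size (PTree.node [l, r]) = 1 + (size l + (size r + 0)) := by
          rw [size_node]; rfl
        have hls : size l < n := by
          have := size_pos r; omega
        have hrs : size r < n := by
          have := size_pos l; omega
        obtain ⟨bl, rfl⟩ := ih _ hls l rfl hl
        obtain ⟨br, rfl⟩ := ih _ hrs r rfl hr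
        exact ⟨node bl br, rfl⟩

lemma toP_surj (T : PTree) (hT : FullBinary T) : ∃ b : BTree, toP b = T :=
  toP_surj_aux (size T) T rfl hT

/-! ### Finiteness of trees of a given size -/

lemma finite_le (n : ℕ) : {b : BTree | bsize b ≤ n}.Finite := by
  induction n with
  | zero =>
    convert Set.finite_empty
    ext b
    simpa using Nat.not_le_of_lt (bsize_pos b)
  | succ n ih =>
    apply Set.Finite.subset (Set.Finite.insert leaf ((ih.prod ih).image fun p => node p.1 p.2))
    rintro b hb
    cases b with
    | leaf => exact Set.mem_insert _ _
    | node l r =>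
      refine Set.mem_insert_iff.2 (Or.inr ⟨(l, r), ⟨?_, ?_⟩, rfl⟩)
      · have := bsize_pos r
        simp only [Set.mem_setOf_eq, bsize] at hb ⊢
        omega
      · have := bsize_pos l
        simp only [Set.mem_setOf_eq, bsize] at hb ⊢
        omega

lemma finite_eq (n : ℕ) : {b : BTree | bsize b = n}.Finite :=
  (finite_le n).subset fun b hb => le_of_eq hb

/-- The finset of binary trees with `n` nodes. -/
noncomputable def Tn (n : ℕ) : Finset BTree := (finite_eq n).toFinset

lemma mem_Tn {n : ℕ} {b : BTree} : b ∈ Tn n ↔ bsize b = n := Set.Finite.mem_toFinset _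

open Classical in
lemma binRCoeff_eq (m n : ℕ) : binRCoeff m n = ∑ b ∈ Tn n, ((Rb b : ℝ)) ^ m := by
  rw [binRCoeff]
  have h1 := Function.Injective.tsum_eq (g := toP)
    (f := fun T : PTree => if size T = n ∧ FullBinary T then ((R T : ℝ)) ^ m else 0)
    toP_injective (by
      intro T hT
      rw [Function.mem_support] at hT
      have hfb : FullBinary T := by
        by_contra hfb
        exact hT (if_neg (fun h => hfb h.2))
      rcases toP_surj T hfb with ⟨b, rfl⟩
      exact ⟨b, rfl⟩)
  rw [← h1]
  have h2 : ∀ b : BTree,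
      (if size (toP b) = n ∧ FullBinary (toP b) then ((R (toP b) : ℝ)) ^ m else 0)
        = if bsize b = n then ((Rb b : ℝ)) ^ m else 0 := by
    intro b
    simp [size_toP, fullBinary_toP, R_toP]
  rw [tsum_congr h2]
  rw [tsum_eq_sum (s := Tn n)
    (f := fun b : BTree => if bsize b = n then ((Rb b : ℝ)) ^ m else 0)
    (fun b hb => if_neg (fun h => hb (mem_Tn.2 h)))]
  exact Finset.sum_congr rfl fun b hb => if_pos (mem_Tn.1 hb)

lemma Tn_zero : Tn 0 = ∅ := by
  ext b
  simp only [mem_Tn, Finset.notMem_empty, iff_false]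
  exact (bsize_pos b).ne'

lemma hat_eq (m a : ℕ) :
    ∑ k ∈ Finset.range (m + 1), (m.choose k : ℝ) * binRCoeff k a
      = ∑ b ∈ Tn a, ((Rb b : ℝ) + 1) ^ m := by
  simp_rw [binRCoeff_eq, Finset.mul_sum]
  rw [Finset.sum_comm]
  apply Finset.sum_congr rfl
  intro b _
  rw [add_pow]
  apply Finset.sum_congr rfl
  intro k _
  rw [one_pow]
  ring

lemma Tn_decomp (n : ℕ) :
    Tn (n + 1) = (if n = 0 then ({leaf} : Finset BTree) else ∅) ∪
      (((Finset.HasAntidiagonal.antidiagonal n).sigma fun p => Tn p.1 ×ˢ Tn p.2).image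
        fun x => node x.2.1 x.2.2) := by
  ext b
  rw [Finset.mem_union, mem_Tn]
  cases b with
  | leaf =>
    have h1 : ¬ ∃ x ∈ (Finset.HasAntidiagonal.antidiagonal n).sigma fun p => Tn p.1 ×ˢ Tn p.2,
        node x.2.1 x.2.2 = leaf := by
      rintro ⟨x, _, h⟩
      simp at h
    constructor
    · intro h
      have hn : n = 0 := by simpa [bsize] using h.symm
      subst hn
      simp
    · intro h
      rcases h with h | h
      · split_ifs at h with hn
        · subst hn; rfl
        · simp at h
      · exact absurd ⟨_, Finset.mem_image.1 h |>.choose_spec.1, Finset.mem_image.1 h |>.choose_spec.2⟩ h1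
  | node l r =>
    constructor
    · intro h
      refine Or.inr (Finset.mem_image.2 ⟨⟨(bsize l, bsize r), (l, r)⟩, ?_, rfl⟩)
      rw [Finset.mem_sigma, Finset.HasAntidiagonal.mem_antidiagonal, Finset.mem_product]
      have hb : bsize l + bsize r = n := by
        simp only [bsize] at h; omega
      exact ⟨hb, mem_Tn.2 rfl, mem_Tn.2 rfl⟩
    · intro h
      rcases h with h | h
      · split_ifs at h with hn <;> simp at h
      · obtain ⟨x, hx, hnode⟩ := Finset.mem_image.1 h
        obtain ⟨rfl, rfl⟩ : x.2.1 = l ∧ x.2.2 = r := by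
          cases hnode; exact ⟨rfl, rfl⟩
        rw [Finset.mem_sigma, Finset.HasAntidiagonal.mem_antidiagonal, Finset.mem_product, mem_Tn, mem_Tn] at hx
        rw [bsize]
        omega

lemma sum_Tn_succ (n : ℕ) (F : BTree → ℝ) :
    ∑ b ∈ Tn (n + 1), F b = (if n = 0 then F leaf else 0) +
      ∑ p ∈ Finset.HasAntidiagonal.antidiagonal n, ∑ l ∈ Tn p.1, ∑ r ∈ Tn p.2, F (node l r) := by
  rw [Tn_decomp]
  rw [Finset.sum_union (Finset.disjoint_left.2 (by
    intro b hb1 hb2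
    split_ifs at hb1 with hn
    · rw [Finset.mem_singleton] at hb1
      subst hb1
      obtain ⟨x, _, hx⟩ := Finset.mem_image.1 hb2
      simp at hx
    · simp at hb1))]
  congr 1
  · split_ifs <;> simp
  · rw [Finset.sum_image ?inj]
    case inj =>
      rintro ⟨p, q⟩ hx ⟨p', q'⟩ hy hxy
      rw [Finset.mem_coe, Finset.mem_sigma, Finset.mem_product, mem_Tn, mem_Tn] at hx hy
      obtain ⟨h1, h2⟩ : q.1 = q'.1 ∧ q.2 = q'.2 := by
        simpa only [BTree.node.injEq] using hxy
      obtain rfl : q = q' := Prod.ext h1 h2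
      have e1 : bsize q.1 = p.1 := hx.2.1
      have e2 : bsize q.2 = p.2 := hx.2.2
      have e3 : bsize q.1 = p'.1 := hy.2.1
      have e4 : bsize q.2 = p'.2 := hy.2.2
      obtain rfl : p = p' := Prod.ext (by omega) (by omega)
      rfl
    rw [Finset.sum_sigma]
    exact Finset.sum_congr rfl fun p _ => Finset.sum_product _ _ _

lemma key (m n : ℕ) : binRCoeff m (n + 1) = (if n + 1 = 1 then (1 : ℝ) else 0) +
    ∑ p ∈ Finset.HasAntidiagonal.antidiagonal n,
      (∑ k ∈ Finset.range (m + 1), (m.choose k : ℝ) * binRCoeff k p.1) *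
      (∑ k ∈ Finset.range (m + 1), (m.choose k : ℝ) * binRCoeff k p.2) := by
  rw [binRCoeff_eq, sum_Tn_succ n (fun b => ((Rb b : ℝ)) ^ m)]
  congr 1
  · simp [Rb]
  · apply Finset.sum_congr rfl
    intro p _
    rw [hat_eq, hat_eq, Finset.sum_mul_sum]
    apply Finset.sum_congr rfl
    intro l _
    apply Finset.sum_congr rfl
    intro r _
    rw [Rb, ← mul_pow]
    push_cast
    ring

end BTree

end BinAux

/-- The generating functions `F_m(z) = ∑_T R(T)^m z^{|T|}` (sums over
full binary trees) satisfy `F_m(z) = z + z (∑_{k=0}^m C(m,k) F_k(z))²` as formal power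
series; in particular `F_0(z) = z + z F_0(z)²`. -/
theorem binary_generating_function_equation :
    (∀ m : ℕ, binF m = PowerSeries.X + PowerSeries.X *
      (∑ k ∈ Finset.range (m + 1), PowerSeries.C (m.choose k : ℝ) * binF k) ^ 2) ∧
    binF 0 = PowerSeries.X + PowerSeries.X * binF 0 ^ 2 := by
  have main : ∀ m : ℕ, binF m = PowerSeries.X + PowerSeries.X *
      (∑ k ∈ Finset.range (m + 1), PowerSeries.C (m.choose k : ℝ) * binF k) ^ 2 := by
    intro m
    have hG : ∀ a : ℕ, PowerSeries.coeff a
        (∑ k ∈ Finset.range (m + 1), PowerSeries.C (m.choose k : ℝ) * binF k)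
          = ∑ k ∈ Finset.range (m + 1), (m.choose k : ℝ) * binRCoeff k a := by
      intro a
      rw [map_sum]
      apply Finset.sum_congr rfl
      intro k _
      rw [PowerSeries.coeff_C_mul, binF, PowerSeries.coeff_mk]
    apply PowerSeries.ext
    intro n
    rw [map_add]
    cases n with
    | zero =>
      have h0 : binRCoeff m 0 = 0 := by
        rw [BinAux.BTree.binRCoeff_eq, BinAux.BTree.Tn_zero, Finset.sum_empty]
      simp [binF, h0]
    | succ n =>
      rw [binF, PowerSeries.coeff_mk, PowerSeries.coeff_X, PowerSeries.coeff_succ_X_mul,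
        sq, PowerSeries.coeff_mul, BinAux.BTree.key m n]
      congr 1
      apply Finset.sum_congr rfl
      intro p _
      rw [hG, hG]
  refine ⟨main, ?_⟩
  have h0 := main 0
  simpa using h0
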